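/- Let h ≥ 1 be an integer and a a real number with 0 < |a| ≤ √2. Then lim_{N→∞} Σ_{0 ≤ k ≤ ⌊(N-1)/2⌋} binom(N,2k+1) a^{2k} (-1)^k (h)_k / (N+1)^{h+k} = 0, where (h)_k is the rising factorial. -/

import Mathlib

/-!
The sum is `(1/m!) ∫₀^∞ t^m e^{-(N+1)t} P_N(-a²t) dt` with `h = m + 1`, where
`P_N(x) = ∑ₖ C(N, 2k+1) xᵏ`, by Euler's integral `(m+k)!/c^{m+k+1} = ∫₀^∞ t^{m+k} e^{-ct} dt`
applied termwise. Evaluating the odd part of `(1 + y)^N` at `y = i|a|√t` gives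
`|P_N(-a²t)| ≤ (1 + a²t)^{N/2} / (|a|√t)`, so the integrand is dominated by
`|a|⁻¹ t^{m-1/2} e^{-t} q(t)^N` with `q(t) = √(1 + a²t) e^{-t}`. For `a² ≤ 2` we have
`1 + a²t < e^{2t}`, i.e. `q < 1` on `(0, ∞)`, and dominated convergence gives the limit `0`.
-/

open Filter

/-- Rising factorial `h (h+1) ⋯ (h+k-1)`. -/
def rising (h k : ℕ) : ℕ := ∏ i ∈ Finset.range k, (h + i)

open Finset MeasureTheory Set Real Nat

theorem Finset.sum_range_two_mul {M : Type*} [AddCommMonoid M] (f : ℕ → M) (n : ℕ) :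
    ∑ j ∈ range (2 * n), f j = ∑ k ∈ range n, f (2 * k) + ∑ k ∈ range n, f (2 * k + 1) := by
  induction n with
  | zero => simp
  | succ n ih =>
    rw [show 2 * (n + 1) = 2 * n + 1 + 1 by ring, sum_range_succ, sum_range_succ, ih,
      sum_range_succ, sum_range_succ]
    abel

def oddChooseSum {R : Type*} [Semiring R] (N : ℕ) (x : R) : R :=
  ∑ k ∈ range ((N - 1) / 2 + 1), (N.choose (2 * k + 1) : R) * x ^ k

theorem map_oddChooseSum {R S : Type*} [Semiring R] [Semiring S] (f : R →+* S) (N : ℕ) (x : R) :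
    f (oddChooseSum N x) = oddChooseSum N (f x) := by
  simp [oddChooseSum, map_sum]

@[fun_prop]
theorem continuous_oddChooseSum (N : ℕ) : Continuous (oddChooseSum N : ℝ → ℝ) := by
  unfold oddChooseSum
  fun_prop

theorem two_mul_mul_oddChooseSum_sq {R : Type*} [CommRing R] (N : ℕ) (y : R) :
    2 * (y * oddChooseSum N (y ^ 2)) = (1 + y) ^ N - (1 - y) ^ N := by
  set f : ℕ → R := fun j => N.choose j * (y ^ j - (-y) ^ j)
  have hf_even (k : ℕ) : f (2 * k) = 0 := by simp [f, (even_two_mul k).neg_pow]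
  have hf_odd (k : ℕ) : f (2 * k + 1) = 2 * (N.choose (2 * k + 1) * y ^ (2 * k + 1)) := by
    simp only [f, (odd_two_mul_add_one k).neg_pow]; ring
  have hf_large (j : ℕ) (hj : N < j) : f j = 0 := by simp [f, Nat.choose_eq_zero_of_lt hj]
  have hbinom : (1 + y) ^ N - (1 - y) ^ N = ∑ j ∈ range (2 * (N + 1)), f j := by
    rw [sub_eq_add_neg 1 y, add_comm 1 y, add_comm 1 (-y), add_pow, add_pow, ← sum_sub_distrib,
      ← sum_subset (range_subset_range.2 (show N + 1 ≤ 2 * (N + 1) by omega))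
      fun j _ hj => hf_large j (by simpa using hj)]
    exact sum_congr rfl fun j _ => by simp only [f, one_pow]; ring
  rw [hbinom, sum_range_two_mul, sum_congr rfl fun k _ => hf_even k, sum_const_zero, zero_add,
    sum_congr rfl fun k _ => hf_odd k, ← mul_sum, oddChooseSum, mul_sum]
  congr 1
  rw [← sum_subset (range_subset_range.2 (show (N - 1) / 2 + 1 ≤ N + 1 by omega))
    fun k _ hk => by
      rw [Finset.mem_range, not_lt] at hk
      simp [Nat.choose_eq_zero_of_lt (show N < 2 * k + 1 by omega)]]
  exact sum_congr rfl fun k _ => by ring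

-- Take `y * I` in place of `y`: then `‖1 ± y * I‖ = √(1 + y ^ 2)`.
theorem abs_mul_abs_oddChooseSum_neg_sq_le (N : ℕ) (y : ℝ) :
    |y| * |oddChooseSum N (-y ^ 2)| ≤ √(1 + y ^ 2) ^ N := by
  have hI : ((y : ℂ) * Complex.I) ^ 2 = ((-y ^ 2 : ℝ) : ℂ) := by
    push_cast; rw [mul_pow, Complex.I_sq]; ring
  have h := two_mul_mul_oddChooseSum_sq N ((y : ℂ) * Complex.I)
  rw [hI, ← Complex.ofRealHom_eq_coe (-y ^ 2), ← map_oddChooseSum,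
    Complex.ofRealHom_eq_coe] at h
  have hnorm : ‖2 * ((y : ℂ) * Complex.I * oddChooseSum N (-y ^ 2))‖ ≤ 2 * √(1 + y ^ 2) ^ N := by
    rw [h]
    refine (norm_sub_le _ _).trans_eq ?_
    rw [norm_pow, norm_pow, sub_eq_add_neg, ← neg_mul, ← Complex.ofReal_neg,
      ← Complex.ofReal_one, Complex.norm_add_mul_I, Complex.norm_add_mul_I]
    simp only [one_pow, neg_sq]; ring
  simpa [norm_mul, Complex.norm_real] using hnorm

theorem integral_pow_mul_exp_neg_mul_Ioi (n : ℕ) {c : ℝ} (hc : 0 < c) :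
    ∫ t in Ioi 0, t ^ n * exp (-(c * t)) = n ! / c ^ (n + 1) := by
  have h := integral_rpow_mul_exp_neg_mul_Ioi (a := n + 1) (by positivity) hc
  rw [add_sub_cancel_right, Gamma_nat_eq_factorial, ← Nat.cast_add_one, rpow_natCast,
    div_pow, one_pow] at h
  simp_rw [rpow_natCast] at h
  rw [h, one_div_mul_eq_div]

theorem integrableOn_pow_mul_exp_neg_mul_Ioi (n : ℕ) {c : ℝ} (hc : 0 < c) :
    IntegrableOn (fun t => t ^ n * exp (-(c * t))) (Ioi 0) :=
  Integrable.of_integral_ne_zero <| by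
    rw [integral_pow_mul_exp_neg_mul_Ioi n hc]; positivity

theorem integral_pow_mul_exp_neg_mul_mul_sum_Ioi (m : ℕ) {c : ℝ} (hc : 0 < c) (s : Finset ℕ)
    (b : ℕ → ℝ) :
    ∫ t in Ioi 0, t ^ m * exp (-(c * t)) * ∑ k ∈ s, b k * t ^ k
      = ∑ k ∈ s, b k * ((m + k) ! / c ^ (m + k + 1)) := by
  have hterm (k : ℕ) (t : ℝ) : t ^ m * exp (-(c * t)) * (b k * t ^ k)
      = b k * (t ^ (m + k) * exp (-(c * t))) := by ring
  simp_rw [mul_sum, hterm]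
  rw [integral_finsetSum _ fun k _ => (integrableOn_pow_mul_exp_neg_mul_Ioi _ hc).const_mul _]
  simp_rw [integral_const_mul, integral_pow_mul_exp_neg_mul_Ioi _ hc]

theorem sum_choose_mul_rising_div_eq_integral (m N : ℕ) (a : ℝ) :
    ∑ k ∈ range ((N - 1) / 2 + 1),
        (N.choose (2 * k + 1) : ℝ) * a ^ (2 * k) * (-1) ^ k * (rising (m + 1) k : ℝ) /
          ((N : ℝ) + 1) ^ (m + 1 + k)
      = (m ! : ℝ)⁻¹ *
          ∫ t in Ioi 0, t ^ m * exp (-((N + 1) * t)) * oddChooseSum N (-(a ^ 2 * t)) := by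
  simp only [oddChooseSum, neg_mul_eq_neg_mul (a ^ 2), mul_pow, ← mul_assoc]
  rw [integral_pow_mul_exp_neg_mul_mul_sum_Ioi m (by positivity), mul_sum]
  refine sum_congr rfl fun k _ => ?_
  have hfact : ((m + k) ! : ℝ) = m ! * rising (m + 1) k := by
    rw [rising, ← Nat.ascFactorial_eq_prod_range]
    exact_mod_cast (factorial_mul_ascFactorial m k).symm
  rw [hfact, neg_pow (a ^ 2), pow_mul, show m + k + 1 = m + 1 + k by ring]
  field_simp

theorem tendsto_integral_of_norm_le_mul_pow {α E : Type*} [MeasurableSpace α]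
    [NormedAddCommGroup E] [NormedSpace ℝ E] {μ : Measure α} {F : ℕ → α → E} {B q : α → ℝ}
    (hF : ∀ n, AEStronglyMeasurable (F n) μ) (hB : Integrable B μ)
    (hq : ∀ᵐ x ∂μ, 0 ≤ q x ∧ q x < 1) (hFB : ∀ n, ∀ᵐ x ∂μ, ‖F n x‖ ≤ B x * q x ^ n) :
    Tendsto (fun n => ∫ x, F n x ∂μ) atTop (nhds 0) := by
  have hbound (n : ℕ) : ∀ᵐ x ∂μ, ‖F n x‖ ≤ B x := by
    filter_upwards [hq, hFB n, hFB 0] with x hqx hn h0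
    have hB0 : 0 ≤ B x := by simpa using (norm_nonneg _).trans h0
    exact hn.trans (mul_le_of_le_one_right hB0 (pow_le_one₀ hqx.1 hqx.2.le))
  have hlim : ∀ᵐ x ∂μ, Tendsto (fun n => F n x) atTop (nhds 0) := by
    filter_upwards [hq, ae_all_iff.2 hFB] with x hqx hx
    exact squeeze_zero_norm hx <| by
      simpa using (tendsto_pow_atTop_nhds_zero_of_lt_one hqx.1 hqx.2).const_mul (B x)
  simpa using tendsto_integral_of_dominated_convergence B hF hB hbound hlim

theorem sqrt_one_add_mul_mul_exp_neg_lt_one {c t : ℝ} (hc : c ≤ 2) (ht : 0 < t) :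
    √(1 + c * t) * exp (-t) < 1 := by
  have hlt : √(1 + c * t) < exp t := by
    rw [sqrt_lt' (exp_pos t), ← exp_nat_mul]
    push_cast
    nlinarith [add_one_lt_exp (show 2 * t ≠ 0 by positivity)]
  calc √(1 + c * t) * exp (-t) < exp t * exp (-t) := by gcongr
    _ = 1 := by rw [← exp_add, add_neg_cancel, exp_zero]

theorem norm_pow_mul_exp_mul_oddChooseSum_le (m N : ℕ) {a t : ℝ} (ha : a ≠ 0) (ht : 0 < t) :
    ‖t ^ m * exp (-((N + 1) * t)) * oddChooseSum N (-(a ^ 2 * t))‖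
      ≤ |a|⁻¹ * (exp (-t) * t ^ ((m : ℝ) + 1 / 2 - 1)) * (√(1 + a ^ 2 * t) * exp (-t)) ^ N := by
  have hy : (|a| * √t) ^ 2 = a ^ 2 * t := by rw [mul_pow, sq_abs, sq_sqrt ht.le]
  have hP := abs_mul_abs_oddChooseSum_neg_sq_le N (|a| * √t)
  rw [hy, abs_of_pos (by positivity), ← le_div_iff₀' (by positivity)] at hP
  have hpow : t ^ ((m : ℝ) + 1 / 2 - 1) = t ^ m / √t := by
    rw [sqrt_eq_rpow, ← rpow_natCast, ← rpow_sub ht]; ring_nf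
  have hexp : exp (-((N + 1) * t)) = exp (-t) * exp (-t) ^ N := by
    rw [← exp_nat_mul, ← exp_add]; ring_nf
  rw [norm_mul, norm_mul, norm_of_nonneg (by positivity), norm_of_nonneg (by positivity),
    Real.norm_eq_abs, hpow, hexp]
  calc t ^ m * (exp (-t) * exp (-t) ^ N) * |oddChooseSum N (-(a ^ 2 * t))|
      ≤ t ^ m * (exp (-t) * exp (-t) ^ N) * (√(1 + a ^ 2 * t) ^ N / (|a| * √t)) := by gcongr
    _ = _ := by rw [mul_pow]; field_simp

theorem stmt_6 (h : ℕ) (hh : 1 ≤ h) (a : ℝ) (ha : 0 < |a|) (ha2 : |a| ≤ Real.sqrt 2) :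
    Tendsto (fun N : ℕ =>
        ∑ k ∈ Finset.range ((N - 1) / 2 + 1),
          (N.choose (2 * k + 1) : ℝ) * a ^ (2 * k) * (-1) ^ k * (rising h k : ℝ) /
            ((N : ℝ) + 1) ^ (h + k))
      atTop (nhds 0) := by
  obtain ⟨m, rfl⟩ : ∃ m, h = m + 1 := ⟨h - 1, by omega⟩
  have ha2' : a ^ 2 ≤ 2 := by simpa using (le_sqrt (abs_nonneg a) zero_le_two).1 ha2
  simp_rw [sum_choose_mul_rising_div_eq_integral]
  have hB : IntegrableOn (fun t => |a|⁻¹ * (exp (-t) * t ^ ((m : ℝ) + 1 / 2 - 1))) (Ioi 0) :=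
    (GammaIntegral_convergent (by positivity)).const_mul _
  have hF (N : ℕ) : AEStronglyMeasurable
      (fun t => t ^ m * exp (-((N + 1) * t)) * oddChooseSum N (-(a ^ 2 * t)))
      (volume.restrict (Ioi 0)) := by fun_prop
  have hlim := tendsto_integral_of_norm_le_mul_pow hF hB
    (ae_restrict_of_forall_mem measurableSet_Ioi fun t ht =>
      ⟨by positivity, sqrt_one_add_mul_mul_exp_neg_lt_one ha2' ht⟩)
    fun N => ae_restrict_of_forall_mem measurableSet_Ioi fun t ht =>
      norm_pow_mul_exp_mul_oddChooseSum_le m N (abs_pos.1 ha) ht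
  simpa using hlim.const_mul (m ! : ℝ)⁻¹
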